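/- arXiv:1703.00263 — 3 statements merged into one kernel-verified Lean document; each statement's English description precedes it below -/
import Mathlib

section
/- For natural numbers n and r with 1 ≤ r ≤ n−1, the second largest eigenvalue (listed with multiplicity) of the adjacency matrix of the Johnson graph J(n,r) equals r(n−r) − n. Consequently, for the normalized transition matrix M = A/(r(n−r)) of the simple random walk on J(n,r), the difference between the top eigenvalue 1 and the second largest eigenvalue equals n/(r(n−r)). -/
/-!
Let `W` be the inclusion matrix between the `k`-subsets and the `(k+1)`-subsets of `Fin n`, and
`A_k` the adjacency matrix of `J(n,k)`. Counting common subsets and common supersets gives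
`Wᵀ W = A_{k+1} + (k+1) I` and `W Wᵀ = A_k + (n-k) I`. Hence `W` maps a `μ`-eigenvector `x` of
`A_{k+1}` to a `(μ + 2k + 1 - n)`-eigenvector of `A_k`, and `W x` is non-constant when `x` is
(unless `μ = -(k+1)`). Induction on `k` then shows that every eigenvalue of `A_r` with a
non-constant eigenvector is at most `r(n-r) - n`. So the degree `r(n-r)` is a simple eigenvalue
(multiplicities of a symmetric matrix are geometric), every other eigenvalue is at most
`r(n-r) - n`, and this bound is attained by `1[a ∈ S] - 1[b ∈ S]`.
-/

open SimpleGraph Polynomial Finset Matrix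

/-- The Johnson graph `J(n,r)`: vertices are the `r`-element subsets of a fixed `n`-element
set, two subsets `S`, `S'` being adjacent iff `|S ∩ S'| = r - 1` (in particular `S ≠ S'`). -/
def johnsonGraph (n r : ℕ) : SimpleGraph {s : Finset (Fin n) // s.card = r} where
  Adj S T := S ≠ T ∧ ((S : Finset (Fin n)) ∩ (T : Finset (Fin n))).card = r - 1
  symm := ⟨fun S T h => ⟨h.1.symm, by rw [Finset.inter_comm]; exact h.2⟩⟩
  loopless := ⟨fun S h => h.1 rfl⟩

instance johnsonGraphAdjDecidable (n r : ℕ) : DecidableRel (johnsonGraph n r).Adj :=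
  fun S T => inferInstanceAs
    (Decidable (S ≠ T ∧ ((S : Finset (Fin n)) ∩ (T : Finset (Fin n))).card = r - 1))

namespace Matrix

variable {V ι : Type*} [Fintype V] [DecidableEq V] [Fintype ι]

theorem isRoot_charpoly_iff_exists_mulVec_eq_smul {K : Type*} [Field K] (A : Matrix V V K)
    (t : K) : A.charpoly.IsRoot t ↔ ∃ v ≠ 0, A *ᵥ v = t • v := by
  rw [← mem_spectrum_iff_isRoot_charpoly, ← spectrum_toLin',
    ← Module.End.hasEigenvalue_iff_mem_spectrum, Module.End.hasEigenvalue_iff,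
    Submodule.ne_bot_iff]
  simp [and_comm]

theorem exists_eq_iff_of_charpoly_eq_prod {K : Type*} [Field K] {A : Matrix V V K}
    {e : ι → K} (hA : A.charpoly = ∏ i, (X - C (e i))) (t : K) :
    (∃ i, e i = t) ↔ ∃ v ≠ 0, A *ᵥ v = t • v := by
  rw [← isRoot_charpoly_iff_exists_mulVec_eq_smul, hA, Polynomial.IsRoot, Polynomial.eval_prod,
    Finset.prod_eq_zero_iff]
  simp [sub_eq_zero, eq_comm]

theorem IsHermitian.card_filter_eq_finrank_eigenspace {A : Matrix V V ℝ} (hA : A.IsHermitian)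
    {e : ι → ℝ} (he : A.charpoly = ∏ i, (X - C (e i))) (t : ℝ) :
    #{i | e i = t} = Module.finrank ℝ (Module.End.eigenspace (toEuclideanLin A) t) := by
  have hroots : Multiset.map e univ.val = Multiset.map hA.eigenvalues₀ univ.val := by
    have := hA.roots_charpoly_eq_eigenvalues₀
    rw [he, roots_prod _ _ (prod_ne_zero_iff.mpr fun i _ => X_sub_C_ne_zero (e i))] at this
    simpa using this
  have hcount := congrArg (Multiset.count t) hroots
  simp only [Multiset.count_map, eq_comm (a := t)] at hcount
  rw [← (isSymmetric_toEuclideanLin_iff.mpr hA).card_filter_eigenvalues_eq finrank_euclideanSpace]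
  exact hcount

theorem IsHermitian.card_filter_le_one_of_forall_mulVec_eq_smul {A : Matrix V V ℝ}
    (hA : A.IsHermitian) {e : ι → ℝ} (he : A.charpoly = ∏ i, (X - C (e i))) {t : ℝ}
    (u : V → ℝ) (hu : ∀ v, A *ᵥ v = t • v → ∃ c : ℝ, v = c • u) :
    #{i | e i = t} ≤ 1 := by
  rw [hA.card_filter_eq_finrank_eigenspace he]
  have hle : Module.End.eigenspace (toEuclideanLin A) t ≤ ℝ ∙ WithLp.toLp 2 u := by
    intro w hw
    rw [Module.End.mem_eigenspace_iff] at hw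
    obtain ⟨c, hc⟩ := hu (WithLp.ofLp w) congr(WithLp.ofLp $hw)
    exact Submodule.mem_span_singleton.mpr ⟨c, congr(WithLp.toLp 2 $hc.symm)⟩
  calc Module.finrank ℝ (Module.End.eigenspace (toEuclideanLin A) t)
      ≤ Module.finrank ℝ (ℝ ∙ WithLp.toLp 2 u) := Submodule.finrank_mono hle
    _ ≤ 1 := by simpa using finrank_span_le_card ({WithLp.toLp 2 u} : Set (EuclideanSpace ℝ V))

end Matrix

theorem Antitone.apply_eq_of_val_eq_one {α : Type*} [LinearOrder α] {N : ℕ} {f : Fin N → α}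
    (hf : Antitone f) {d l : α} (hld : l < d) (hd : ∃ i, f i = d)
    (hd_unique : #{i | f i = d} ≤ 1) (hl : ∃ j, f j = l) (hle : ∀ i, f i ≠ d → f i ≤ l)
    (i : Fin N) (hi : (i : ℕ) = 1) :
    f i = l := by
  let z : Fin N := ⟨0, by omega⟩
  have hz : f z = d := by
    obtain ⟨i₀, rfl⟩ := hd
    refine le_antisymm ?_ (hf (Fin.le_iff_val_le_val.mpr (Nat.zero_le _)))
    by_contra! h
    exact lt_asymm h ((hle z h.ne').trans_lt hld)
  have hzi : z ≠ i := fun h => by simp [z, ← h] at hi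
  have hid : f i ≠ d := fun h =>
    (one_lt_card.mpr ⟨z, by simpa using hz, i, by simpa using h, hzi⟩).not_ge hd_unique
  obtain ⟨j, hj⟩ := hl
  have hij : i ≤ j := by
    have hjz : j ≠ z := fun h => hld.ne (by rw [← hj, h, hz])
    rw [Fin.le_iff_val_le_val, hi]
    exact Nat.one_le_iff_ne_zero.mpr fun h => hjz (Fin.ext h)
  exact le_antisymm (hle i hid) (hj ▸ hf hij)

namespace Johnson

abbrev Slice (n k : ℕ) := {s : Finset (Fin n) // s.card = k}

variable {n : ℕ}

theorem card_filter_subset (k : ℕ) (U : Finset (Fin n)) :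
    #{T : Slice n k | (T : Finset (Fin n)) ⊆ U} = U.card.choose k := by
  rw [← card_powersetCard, ← card_map (Function.Embedding.subtype _)]
  congr 1
  ext s
  simp [mem_powersetCard, and_comm]

theorem card_filter_superset {m : ℕ} {U : Finset (Fin n)} (hU : U.card ≤ m) :
    #{S : Slice n m | U ⊆ S} = (n - U.card).choose (m - U.card) := by
  have hcompl : n - U.card = Uᶜ.card := by rw [card_compl, Fintype.card_fin]
  rw [hcompl, ← card_powersetCard]
  refine card_bij' (fun S _ => (S : Finset (Fin n)) \ U)
    (fun T hT => ⟨T ∪ U, ?_⟩) ?_ ?_ ?_ ?_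
  · obtain ⟨hTU, hT⟩ := mem_powersetCard.mp hT
    rw [card_union_of_disjoint (subset_compl_iff_disjoint_right.mp hTU), hT]
    omega
  · intro S hS
    simp only [mem_filter, mem_univ, true_and] at hS
    rw [mem_powersetCard, card_sdiff_of_subset hS, S.2]
    exact ⟨fun x hx => mem_compl.mpr (mem_sdiff.mp hx).2, rfl⟩
  · intro T hT
    simp
  · intro S hS
    simp only [mem_filter, mem_univ, true_and] at hS
    exact Subtype.ext (sdiff_union_of_subset hS)
  · intro T hT
    exact union_sdiff_cancel_right
      (subset_compl_iff_disjoint_right.mp (mem_powersetCard.mp hT).1)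

theorem nonempty_slice {k : ℕ} (hk : k ≤ n) : Nonempty (Slice n k) :=
  have ⟨s, _, hs⟩ := exists_subset_card_eq (s := univ) (by simpa using hk)
  ⟨⟨s, hs⟩⟩

theorem card_inter_lt_of_ne {m : ℕ} {S S' : Slice n m} (h : S ≠ S') :
    ((S : Finset (Fin n)) ∩ S').card < m := by
  refine (card_le_card inter_subset_left).trans_eq S.2 |>.lt_of_ne fun heq => h ?_
  have hsub : (S : Finset (Fin n)) ⊆ S' :=
    (eq_of_subset_of_card_le inter_subset_left (heq.trans S.2.symm).ge).symm ▸ inter_subset_right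
  exact Subtype.ext (eq_of_subset_of_card_le hsub (S.2.trans S'.2.symm).ge)

def inclusionMatrix (R : Type*) [Zero R] [One R] (n k : ℕ) :
    Matrix (Slice n k) (Slice n (k + 1)) R :=
  Matrix.of fun T S => if (T : Finset (Fin n)) ⊆ S then 1 else 0

variable {k : ℕ} {R : Type*} [CommRing R]

theorem transpose_mul_inclusionMatrix_apply (S S' : Slice n (k + 1)) :
    ((inclusionMatrix R n k)ᵀ * inclusionMatrix R n k) S S' =
      (((S : Finset (Fin n)) ∩ S').card.choose k : R) := by
  simp [mul_apply, inclusionMatrix, ← ite_and, ← subset_inter_iff, card_filter_subset,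
    inter_comm]

theorem inclusionMatrix_mul_transpose_apply (T T' : Slice n k) :
    (inclusionMatrix R n k * (inclusionMatrix R n k)ᵀ) T T' =
      (#{S : Slice n (k + 1) | (T : Finset (Fin n)) ∪ T' ⊆ S} : R) := by
  simp [mul_apply, inclusionMatrix, ← ite_and, union_subset_iff, and_comm]

theorem transpose_mul_inclusionMatrix :
    (inclusionMatrix R n k)ᵀ * inclusionMatrix R n k =
      (johnsonGraph n (k + 1)).adjMatrix R + (k + 1 : R) • 1 := by
  ext S S'
  rw [transpose_mul_inclusionMatrix_apply, Matrix.add_apply, adjMatrix_apply, Matrix.smul_apply,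
    one_apply]
  by_cases h : S = S'
  · subst h
    simp [S.2, Nat.choose_succ_self_right]
  · have hadj : (johnsonGraph n (k + 1)).Adj S S' ↔ ((S : Finset (Fin n)) ∩ S').card = k := by
      simp [johnsonGraph, h]
    rcases (Nat.lt_succ_iff.mp (card_inter_lt_of_ne h)).lt_or_eq with hlt | heq
    · simp [hadj, hlt.ne, h, Nat.choose_eq_zero_of_lt hlt]
    · simp [hadj, heq, h]

theorem inclusionMatrix_mul_transpose :
    inclusionMatrix R n k * (inclusionMatrix R n k)ᵀ =
      (johnsonGraph n k).adjMatrix R + ((n - k : ℕ) : R) • 1 := by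
  ext T T'
  rw [inclusionMatrix_mul_transpose_apply, Matrix.add_apply, adjMatrix_apply, Matrix.smul_apply,
    one_apply]
  by_cases h : T = T'
  · subst h
    rw [union_self, card_filter_superset (by omega)]
    simp [T.2, show k + 1 - k = 1 by omega]
  · have hsum := card_union_add_card_inter (T : Finset (Fin n)) T'
    have hlt := card_inter_lt_of_ne h
    rw [T.2, T'.2] at hsum
    have hadj : (johnsonGraph n k).Adj T T' ↔ ((T : Finset (Fin n)) ∪ T').card = k + 1 := by
      simp only [johnsonGraph, ne_eq, h, not_false_eq_true, true_and]
      omega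
    by_cases hu : ((T : Finset (Fin n)) ∪ T').card = k + 1
    · rw [card_filter_superset hu.le]
      simp [hadj, hu, h]
    · have hempty : #{S : Slice n (k + 1) | (T : Finset (Fin n)) ∪ T' ⊆ S} = 0 := by
        refine card_eq_zero.mpr (filter_eq_empty_iff.mpr fun S _ hS => hu ?_)
        have := card_le_card hS
        rw [S.2] at this
        omega
      simp [hadj, hu, h, hempty]

theorem adjMatrix_mulVec (x : Slice n (k + 1) → R) :
    (johnsonGraph n (k + 1)).adjMatrix R *ᵥ x =
      (inclusionMatrix R n k)ᵀ *ᵥ (inclusionMatrix R n k *ᵥ x) - (k + 1 : R) • x := by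
  rw [mulVec_mulVec, transpose_mul_inclusionMatrix, add_mulVec, smul_mulVec, one_mulVec,
    add_sub_cancel_right]

theorem transpose_inclusionMatrix_mulVec_mulVec {μ : R} {x : Slice n (k + 1) → R}
    (hx : (johnsonGraph n (k + 1)).adjMatrix R *ᵥ x = μ • x) :
    (inclusionMatrix R n k)ᵀ *ᵥ (inclusionMatrix R n k *ᵥ x) = (μ + (k + 1)) • x := by
  rw [add_smul, ← hx, adjMatrix_mulVec, sub_add_cancel]

theorem adjMatrix_mulVec_inclusionMatrix_mulVec {μ : R} {x : Slice n (k + 1) → R}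
    (hx : (johnsonGraph n (k + 1)).adjMatrix R *ᵥ x = μ • x) :
    (johnsonGraph n k).adjMatrix R *ᵥ (inclusionMatrix R n k *ᵥ x) =
      (μ + (k + 1) - (n - k : ℕ)) • (inclusionMatrix R n k *ᵥ x) := by
  have h : (inclusionMatrix R n k * (inclusionMatrix R n k)ᵀ) *ᵥ
      (inclusionMatrix R n k *ᵥ x) = (μ + (k + 1)) • (inclusionMatrix R n k *ᵥ x) := by
    rw [← mulVec_mulVec, transpose_inclusionMatrix_mulVec_mulVec hx, mulVec_smul]
  rw [inclusionMatrix_mul_transpose, add_mulVec, smul_mulVec, one_mulVec] at h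
  rw [sub_smul, ← h, add_sub_cancel_right]

theorem inclusionMatrix_mulVec_apply (x : Slice n (k + 1) → R) (T : Slice n k) :
    (inclusionMatrix R n k *ᵥ x) T = ∑ S : Slice n (k + 1) with T.1 ⊆ S.1, x S := by
  simp [mulVec, dotProduct, inclusionMatrix, sum_filter]

theorem transpose_inclusionMatrix_mulVec_apply (y : Slice n k → R) (S : Slice n (k + 1)) :
    ((inclusionMatrix R n k)ᵀ *ᵥ y) S = ∑ T : Slice n k with T.1 ⊆ S.1, y T := by
  simp [mulVec, dotProduct, inclusionMatrix, sum_filter]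

theorem inclusionMatrix_mulVec_const (c : R) :
    inclusionMatrix R n k *ᵥ (fun _ => c) = fun _ => ((n - k : ℕ) : R) * c := by
  ext T
  rw [inclusionMatrix_mulVec_apply, sum_const, card_filter_superset (by omega), T.2,
    show k + 1 - k = 1 by omega, Nat.choose_one_right, nsmul_eq_mul]

theorem transpose_inclusionMatrix_mulVec_const (c : R) :
    (inclusionMatrix R n k)ᵀ *ᵥ (fun _ => c) = fun _ => (k + 1 : R) * c := by
  ext S
  rw [transpose_inclusionMatrix_mulVec_apply, sum_const, card_filter_subset, S.2,
    Nat.choose_succ_self_right, nsmul_eq_mul]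
  push_cast
  ring

def memIndicator {m : ℕ} (a : Fin n) : Slice n m → R :=
  fun S => if a ∈ (S : Finset (Fin n)) then 1 else 0

theorem inclusionMatrix_mulVec_memIndicator (a : Fin n) :
    inclusionMatrix R n k *ᵥ memIndicator a =
      fun T : Slice n k => if a ∈ (T : Finset (Fin n)) then ((n - k : ℕ) : R) else 1 := by
  ext T
  rw [inclusionMatrix_mulVec_apply]
  simp only [memIndicator]
  rw [← sum_filter, sum_const, nsmul_one, filter_filter]
  split_ifs with ha
  · rw [filter_congr fun S _ => and_iff_left_of_imp fun h => h ha,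
      card_filter_superset (by omega), T.2, show k + 1 - k = 1 by omega, Nat.choose_one_right]
  · have hcard : (insert a (T : Finset (Fin n))).card = k + 1 := by
      rw [card_insert_of_notMem ha, T.2]
    rw [filter_congr fun S _ => (insert_subset_iff.trans and_comm).symm,
      card_filter_superset hcard.le, hcard, Nat.sub_self, Nat.choose_zero_right, Nat.cast_one]

theorem transpose_inclusionMatrix_mulVec_memIndicator (a : Fin n) :
    (inclusionMatrix R n k)ᵀ *ᵥ memIndicator a = (k : R) • memIndicator a := by
  ext S
  rw [transpose_inclusionMatrix_mulVec_apply]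
  simp only [memIndicator, Pi.smul_apply, smul_eq_mul, mul_ite, mul_one, mul_zero]
  rw [← sum_filter, sum_const, nsmul_one, filter_filter]
  split_ifs with ha
  · have hsplit := card_filter_add_card_filter_not (s := ({T | T.1 ⊆ S.1} : Finset (Slice n k)))
      fun T => a ∈ (T : Finset (Fin n))
    rw [filter_filter, filter_filter, card_filter_subset, S.2, Nat.choose_succ_self_right] at hsplit
    rw [filter_congr fun T _ => (subset_erase (a := a)).symm, card_filter_subset,
      card_erase_of_mem ha, S.2, Nat.add_sub_cancel, Nat.choose_self] at hsplit
    rw [show #{T : Slice n k | T.1 ⊆ S.1 ∧ a ∈ T.1} = k by omega]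
  · rw [filter_false_of_mem fun T _ h => ha (h.1 h.2), card_empty, Nat.cast_zero]

theorem adjMatrix_mulVec_const (hk : k + 1 ≤ n) (c : R) :
    (johnsonGraph n (k + 1)).adjMatrix R *ᵥ (fun _ => c) =
      (((k + 1 : ℕ) : R) * (n - (k + 1 : ℕ))) • fun _ => c := by
  rw [adjMatrix_mulVec, inclusionMatrix_mulVec_const, transpose_inclusionMatrix_mulVec_const]
  ext S
  simp only [Pi.sub_apply, Pi.smul_apply, smul_eq_mul, Nat.cast_sub (by omega : k ≤ n)]
  push_cast
  ring

theorem adjMatrix_mulVec_memIndicator_sub (hk : k + 1 ≤ n) (a b : Fin n) :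
    (johnsonGraph n (k + 1)).adjMatrix R *ᵥ (memIndicator a - memIndicator b) =
      (((k + 1 : ℕ) : R) * (n - (k + 1 : ℕ)) - n) • (memIndicator a - memIndicator b) := by
  have hdown : inclusionMatrix R n k *ᵥ (memIndicator a - memIndicator b) =
      ((n - (k + 1) : R)) • (memIndicator a - memIndicator b) := by
    rw [mulVec_sub, inclusionMatrix_mulVec_memIndicator, inclusionMatrix_mulVec_memIndicator]
    ext T
    simp only [memIndicator, Pi.sub_apply, Pi.smul_apply, smul_eq_mul,
      Nat.cast_sub (by omega : k ≤ n)]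
    split_ifs <;> ring
  rw [adjMatrix_mulVec, hdown, mulVec_smul, mulVec_sub,
    transpose_inclusionMatrix_mulVec_memIndicator, transpose_inclusionMatrix_mulVec_memIndicator,
    ← smul_sub, smul_smul, ← sub_smul]
  congr 1
  push_cast
  ring

theorem memIndicator_sub_ne_zero [Nontrivial R] (hk : k + 2 ≤ n) {a b : Fin n} (hab : a ≠ b) :
    (memIndicator a - memIndicator b : Slice n (k + 1) → R) ≠ 0 := by
  have hcard : ((k + 1 : ℕ) : ℕ∞) < ENat.card (Fin n) := by
    rw [ENat.card_eq_coe_fintype_card, Fintype.card_fin]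
    exact_mod_cast (show k + 1 < n by omega)
  obtain ⟨S, haS, hbS⟩ := Set.powersetCard.exists_mem_notMem (by omega) hcard hab
  intro h
  have := congrFun h ⟨S, S.2⟩
  simp [memIndicator, Set.powersetCard.mem_coe_iff, haS, hbS] at this

theorem eigenvalue_le_of_ne_const {μ : ℝ} {x : Slice n k → ℝ}
    (hx : (johnsonGraph n k).adjMatrix ℝ *ᵥ x = μ • x) (hnc : ∀ c, x ≠ fun _ => c) :
    μ ≤ k * (n - k) - n := by
  induction k generalizing μ with
  | zero =>
    refine (hnc (x ⟨∅, card_empty⟩) ?_).elim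
    ext S
    exact congrArg x (Subtype.ext (card_eq_zero.mp S.2))
  | succ k ih =>
    obtain ⟨S₀⟩ : Nonempty (Slice n (k + 1)) := by
      by_contra h
      exact hnc 0 (by ext S; exact (h ⟨S⟩).elim)
    have hkn : k + 1 ≤ n := S₀.2 ▸ card_le_univ _ |>.trans_eq (Fintype.card_fin n)
    have hkn' : (k : ℝ) + 1 ≤ n := by exact_mod_cast hkn
    by_cases hμ : μ + (k + 1) = 0
    · push_cast
      nlinarith
    have hup := transpose_inclusionMatrix_mulVec_mulVec hx
    have hync : ∀ c, inclusionMatrix ℝ n k *ᵥ x ≠ fun _ => c := by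
      rintro c hc
      refine hnc ((μ + (k + 1))⁻¹ * ((k + 1) * c)) ?_
      ext S
      have := congrFun hup S
      rw [hc, transpose_inclusionMatrix_mulVec_const, Pi.smul_apply, smul_eq_mul] at this
      field_simp
      linarith
    have := ih (adjMatrix_mulVec_inclusionMatrix_mulVec hx) hync
    rw [Nat.cast_sub (by omega)] at this
    push_cast
    nlinarith

theorem eq_const_of_mulVec_eq_smul (hn : 0 < n) {x : Slice n k → ℝ}
    (hx : (johnsonGraph n k).adjMatrix ℝ *ᵥ x = ((k : ℝ) * (n - k)) • x) :
    ∃ c, x = fun _ => c := by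
  by_contra! hnc
  have := eigenvalue_le_of_ne_const hx hnc
  have : (0 : ℝ) < n := by exact_mod_cast hn
  linarith

theorem eigenvalue_le_of_ne (hk : k + 1 ≤ n) {μ : ℝ} {x : Slice n (k + 1) → ℝ}
    (hx0 : x ≠ 0) (hx : (johnsonGraph n (k + 1)).adjMatrix ℝ *ᵥ x = μ • x)
    (hμ : μ ≠ ((k + 1 : ℕ) : ℝ) * (n - (k + 1 : ℕ))) :
    μ ≤ ((k + 1 : ℕ) : ℝ) * (n - (k + 1 : ℕ)) - n := by
  refine eigenvalue_le_of_ne_const hx fun c hc => hμ ?_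
  subst hc
  have hc0 : c ≠ 0 := by rintro rfl; exact hx0 rfl
  have h := hx.symm.trans (adjMatrix_mulVec_const hk c)
  obtain ⟨S⟩ : Nonempty (Slice n (k + 1)) := by
    by_contra hS; exact hx0 (by ext S; exact (hS ⟨S⟩).elim)
  simpa [hc0] using congrFun h S

end Johnson

/-- For `1 ≤ r ≤ n - 1`, if `eig : Fin (binom n r) → ℝ` enumerates the eigenvalues of the
adjacency matrix `A` of `J(n,r)` with multiplicity in decreasing order (i.e. it is antitone and
the characteristic polynomial of `A` is `∏ i, (X - eig i)`), then the second largest eigenvalue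
`eig 1` equals `r(n-r) - n`; consequently, for the transition matrix `M = A / (r(n-r))` of the
simple random walk, the difference between the top eigenvalue `1` and the second largest
eigenvalue `eig 1 / (r(n-r))` equals `n / (r(n-r))`. -/
theorem stmt1 (n r : ℕ) (h1 : 1 ≤ r) (h2 : r ≤ n - 1)
    (eig : Fin (n.choose r) → ℝ) (hmono : Antitone eig)
    (hchar : ((johnsonGraph n r).adjMatrix ℝ).charpoly
      = ∏ i : Fin (n.choose r), (X - C (eig i))) :
    ∀ i : Fin (n.choose r), (i : ℕ) = 1 →
      eig i = (r : ℝ) * ((n : ℝ) - r) - n ∧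
      1 - eig i / ((r : ℝ) * ((n : ℝ) - r)) = (n : ℝ) / ((r : ℝ) * ((n : ℝ) - r)) := by
  intro i hi
  obtain ⟨k, rfl⟩ : ∃ k, r = k + 1 := ⟨r - 1, by omega⟩
  have hk : k + 2 ≤ n := by omega
  have hn : (0 : ℝ) < n := by exact_mod_cast (show 0 < n by omega)
  set d : ℝ := ((k + 1 : ℕ) : ℝ) * (n - (k + 1 : ℕ))
  have hd : ∃ i, eig i = d :=
    (exists_eq_iff_of_charpoly_eq_prod hchar _).mpr
      ⟨fun _ => 1, fun h => one_ne_zero (congrFun h (Johnson.nonempty_slice (by omega)).some),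
        Johnson.adjMatrix_mulVec_const (by omega) 1⟩
  have hl : ∃ j, eig j = d - n :=
    (exists_eq_iff_of_charpoly_eq_prod hchar _).mpr
      ⟨_, Johnson.memIndicator_sub_ne_zero hk (a := ⟨0, by omega⟩) (b := ⟨1, by omega⟩)
          (by simp),
        Johnson.adjMatrix_mulVec_memIndicator_sub (by omega) _ _⟩
  have hd_unique : #{i | eig i = d} ≤ 1 :=
    (isHermitian_adjMatrix ℝ _).card_filter_le_one_of_forall_mulVec_eq_smul hchar (fun _ => 1)
      fun v hv => by
        obtain ⟨c, rfl⟩ := Johnson.eq_const_of_mulVec_eq_smul (by omega) hv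
        exact ⟨c, by ext; simp⟩
  have hle : ∀ i, eig i ≠ d → eig i ≤ d - n := fun i hi => by
    obtain ⟨v, hv0, hv⟩ := (exists_eq_iff_of_charpoly_eq_prod hchar _).mp ⟨i, rfl⟩
    exact Johnson.eigenvalue_le_of_ne (by omega) hv0 hv hi
  have hsecond : eig i = d - n :=
    hmono.apply_eq_of_val_eq_one (by linarith) hd hd_unique hl hle i hi
  refine ⟨hsecond, ?_⟩
  have hd_pos : 0 < d := mul_pos (by positivity) (sub_pos.mpr (by exact_mod_cast (by omega)))
  rw [hsecond]
  field_simp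
  ring
end

section
/- Let n, k, ℓ be natural numbers with ℓ ≤ n − k ≤ n, and let H be an (n−k) × n matrix over F₂ = ZMod 2 such that the (n−k) × (n−k−ℓ) submatrix formed by the last n−k−ℓ columns of H has rank n−k−ℓ. Then there exist an invertible (n−k) × (n−k) matrix U over F₂, an ℓ × (k+ℓ) matrix H′ and an (n−k−ℓ) × (k+ℓ) matrix H″ over F₂ such that U·H is the block matrix whose first ℓ rows are (H′ | 0_{ℓ × (n−k−ℓ)}) and whose last n−k−ℓ rows are (H″ | I_{n−k−ℓ}). -/
open Matrix

/-! The last `n-k-ℓ` columns of `H` are linearly independent, so they extend to a basis of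
`F₂^(n-k)` in which they come last. If `M` is the matrix with this basis as columns, `U = M⁻¹`
sends them to the last standard basis vectors, which is the block `(0 / I)` in the last columns
of `U·H`; the other columns of `U·H` are `H′` and `H″`. -/

theorem LinearIndependent.exists_linearIndependent_sumElim {K V ι κ : Type*} [Field K]
    [AddCommGroup V] [Module K V] [FiniteDimensional K V] [Fintype ι] [Fintype κ] {v : ι → V}
    (hv : LinearIndependent K v) (hcard : Module.finrank K V = Fintype.card κ + Fintype.card ι) :
    ∃ w : κ → V, LinearIndependent K (Sum.elim w v) := by
  obtain ⟨W, hW⟩ := (Submodule.span K (Set.range v)).exists_isCompl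
  have hdim : Module.finrank K W = Fintype.card κ := by
    have := Submodule.finrank_add_eq_of_isCompl hW
    rw [finrank_span_eq_card hv] at this
    omega
  let c := (Module.finBasisOfFinrankEq K W hdim).reindex (Fintype.equivFin κ).symm
  refine ⟨W.subtype ∘ c, .sum_type (c.linearIndependent.map' W.subtype W.ker_subtype) hv ?_⟩
  refine hW.disjoint.symm.mono_left (Submodule.span_le.2 ?_)
  rintro _ ⟨i, rfl⟩
  exact (c i).2

theorem Matrix.linearIndependent_cols_of_rank_eq_card {K m r : Type*} [Field K] [Fintype m]
    [Fintype r] {B : Matrix m r K} (hB : B.rank = Fintype.card r) :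
    LinearIndependent K B.col := by
  rw [linearIndependent_iff_card_eq_finrank_span, ← hB, rank_eq_finrank_span_cols, Set.finrank]

theorem Matrix.fromRows_zero_one {K l r : Type*} [Zero K] [One K] [DecidableEq l] [DecidableEq r] :
    fromRows (0 : Matrix l r K) 1 = (1 : Matrix (l ⊕ r) (l ⊕ r) K).submatrix id Sum.inr := by
  ext (i | i) j <;> simp [one_apply]

theorem Matrix.exists_isUnit_mul_eq_fromRows_zero_one {K m l r : Type*} [Field K] [Fintype m]
    [DecidableEq m] [Fintype l] [Fintype r] [DecidableEq r] (e : m ≃ l ⊕ r) (B : Matrix m r K)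
    (hB : LinearIndependent K B.col) :
    ∃ U : Matrix m m K, IsUnit U ∧ U * B = (fromRows (0 : Matrix l r K) 1).submatrix e id := by
  classical
  obtain ⟨w, hw⟩ := hB.exists_linearIndependent_sumElim (κ := l) (by
    simp [← Fintype.card_sum, Fintype.card_congr e])
  let M : Matrix m m K := of fun i t => Sum.elim w B.col (e t) i
  have hM : IsUnit M := linearIndependent_cols_iff_isUnit.1 (hw.comp e e.injective)
  have hMB : M * (fromRows (0 : Matrix l r K) 1).submatrix e id = B := by
    rw [fromRows_zero_one, submatrix_submatrix, Function.id_comp, mul_submatrix_one]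
    ext i j
    simp [M]
  refine ⟨M⁻¹, isUnit_nonsing_inv_iff.2 hM, ?_⟩
  rw [← hMB, nonsing_inv_mul_cancel_left _ _ ((isUnit_iff_isUnit_det M).1 hM)]

theorem Matrix.exists_isUnit_mul_eq_fromBlocks_zero_one {K m n l k r : Type*} [Field K]
    [Fintype m] [DecidableEq m] [Fintype n] [Fintype l] [Fintype r] [DecidableEq r]
    (eR : m ≃ l ⊕ r) (eC : n ≃ k ⊕ r) (H : Matrix m n K)
    (hH : (H.submatrix id (eC.symm ∘ Sum.inr)).rank = Fintype.card r) :
    ∃ (U : Matrix m m K) (H' : Matrix l k K) (H'' : Matrix r k K),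
      IsUnit U ∧ U * H = (fromBlocks H' 0 H'' 1).submatrix eR eC := by
  obtain ⟨U, hU, hUB⟩ := exists_isUnit_mul_eq_fromRows_zero_one eR _
    (linearIndependent_cols_of_rank_eq_card hH)
  set G := (U * H).submatrix eR.symm eC.symm
  have hG : G.submatrix id Sum.inr = fromRows 0 1 := by
    change (U * H.submatrix id (eC.symm ∘ Sum.inr)).submatrix eR.symm id = _
    rw [hUB, submatrix_submatrix]
    simp
  refine ⟨U, G.toBlocks₁₁, G.toBlocks₂₁, hU, ?_⟩
  have h₁₂ : G.toBlocks₁₂ = 0 := by ext i j; exact congr_fun₂ hG (Sum.inl i) j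
  have h₂₂ : G.toBlocks₂₂ = 1 := by ext i j; exact congr_fun₂ hG (Sum.inr i) j
  rw [← h₁₂, ← h₂₂, fromBlocks_toBlocks]
  simp [G]

/-- If the last `n-k-ℓ` columns of the `(n-k) × n` parity-check matrix `H` over `F₂` form a
matrix of full rank `n-k-ℓ`, then there is an invertible matrix `U` and matrices `H′`, `H″`
such that `U·H` is the block matrix with first `ℓ` rows `(H′ | 0)` and last `n-k-ℓ` rows
`(H″ | I)`. -/
theorem stmt9 (n k ℓ : ℕ) (hk : k ≤ n) (hℓ : ℓ ≤ n - k)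
    (H : Matrix (Fin (n - k)) (Fin n) (ZMod 2))
    (hrank : (H.submatrix id fun j : Fin (n - k - ℓ) =>
        (⟨k + ℓ + (j : ℕ), by omega⟩ : Fin n)).rank = n - k - ℓ) :
    ∃ (U : Matrix (Fin (n - k)) (Fin (n - k)) (ZMod 2))
      (H' : Matrix (Fin ℓ) (Fin (k + ℓ)) (ZMod 2))
      (H'' : Matrix (Fin (n - k - ℓ)) (Fin (k + ℓ)) (ZMod 2)),
      IsUnit U ∧
      U * H = (Matrix.fromBlocks H' 0 H''
          (1 : Matrix (Fin (n - k - ℓ)) (Fin (n - k - ℓ)) (ZMod 2))).submatrix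
        (fun i : Fin (n - k) =>
          finSumFinEquiv.symm (Fin.cast (by omega : n - k = ℓ + (n - k - ℓ)) i))
        (fun j : Fin n =>
          finSumFinEquiv.symm (Fin.cast (by omega : n = (k + ℓ) + (n - k - ℓ)) j)) := by
  have hrows : n - k = ℓ + (n - k - ℓ) := by omega
  have hcols : n = (k + ℓ) + (n - k - ℓ) := by omega
  exact exists_isUnit_mul_eq_fromBlocks_zero_one ((finCongr hrows).trans finSumFinEquiv.symm)
    ((finCongr hcols).trans finSumFinEquiv.symm) H (by rw [Fintype.card_fin]; exact hrank)
end

section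
/- Let m, p, Δ be natural numbers with p even and p ≤ m, and let e ∈ F₂^m be a vector of Hamming weight p. Then the number of vectors x ∈ F₂^m such that x has Hamming weight p/2 + Δ and e + x also has Hamming weight p/2 + Δ equals binom(p, p/2) · binom(m − p, Δ). Equivalently, e can be written as a sum x + y of two vectors of F₂^m each of Hamming weight p/2 + Δ in exactly binom(p, p/2) · binom(m − p, Δ) ordered ways. -/
/-- Let `p` be even, `p ≤ m`, and let `e ∈ F₂^m` have Hamming weight `p`.  The number of
vectors `x ∈ F₂^m` such that both `x` and `e + x` have Hamming weight `p/2 + Δ` equals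
`binom(p, p/2) · binom(m-p, Δ)`; equivalently, `e` can be written as an ordered sum `x + y` of
two vectors of Hamming weight `p/2 + Δ` in exactly `binom(p, p/2) · binom(m-p, Δ)` ways. -/
theorem stmt15 (m p Δ : ℕ) (hpe : Even p) (hpm : p ≤ m) (e : Fin m → ZMod 2)
    (he : (Finset.univ.filter fun j => e j ≠ 0).card = p) :
    (Finset.univ.filter fun x : Fin m → ZMod 2 =>
        (Finset.univ.filter fun j => x j ≠ 0).card = p / 2 + Δ ∧
        (Finset.univ.filter fun j => (e + x) j ≠ 0).card = p / 2 + Δ).card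
      = p.choose (p / 2) * (m - p).choose Δ ∧
    (Finset.univ.filter fun xy : (Fin m → ZMod 2) × (Fin m → ZMod 2) =>
        xy.1 + xy.2 = e ∧
        (Finset.univ.filter fun j => xy.1 j ≠ 0).card = p / 2 + Δ ∧
        (Finset.univ.filter fun j => xy.2 j ≠ 0).card = p / 2 + Δ).card
      = p.choose (p / 2) * (m - p).choose Δ := by
  classical
  set E : Finset (Fin m) := Finset.univ.filter (fun j => e j ≠ 0) with hEdef
  -- ZMod 2 facts
  have hzm : ∀ a b : ZMod 2, (a + b ≠ 0 ↔ ((a ≠ 0 ∧ ¬ b ≠ 0) ∨ (b ≠ 0 ∧ ¬ a ≠ 0))) := by decide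
  have hone : ∀ a : ZMod 2, a ≠ 0 → a = 1 := by decide
  -- support of e + x is the symmetric difference
  have hsymm : ∀ x : Fin m → ZMod 2,
      (Finset.univ.filter fun j => (e + x) j ≠ 0)
        = symmDiff E (Finset.univ.filter fun j => x j ≠ 0) := by
    intro x
    ext j
    simp only [Finset.mem_filter, Finset.mem_univ, true_and, Finset.mem_symmDiff, hEdef,
      Pi.add_apply]
    exact hzm (e j) (x j)
  -- the arithmetic characterization of the condition
  obtain ⟨q, hq⟩ := hpe
  have hchar : ∀ S : Finset (Fin m),
      (S.card = p / 2 + Δ ∧ (symmDiff E S).card = p / 2 + Δ)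
        ↔ ((S ∩ E).card = p / 2 ∧ (S \ E).card = Δ) := by
    intro S
    have h1 : (S ∩ E).card + (S \ E).card = S.card := Finset.card_inter_add_card_sdiff S E
    have h2 : (E ∩ S).card + (E \ S).card = E.card := Finset.card_inter_add_card_sdiff E S
    have h3 : (symmDiff E S).card = (E \ S).card + (S \ E).card := by
      rw [show symmDiff E S = (E \ S) ∪ (S \ E) from rfl,
        Finset.card_union_of_disjoint disjoint_sdiff_sdiff]
    have h4 : (E ∩ S).card = (S ∩ E).card := by rw [Finset.inter_comm]
    have h5 : E.card = p := he
    omega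
  -- support of an indicator vector
  have hind : ∀ A : Finset (Fin m),
      (Finset.univ.filter fun j => (fun k => if k ∈ A then (1 : ZMod 2) else 0) j ≠ 0) = A := by
    intro A
    ext j
    simp only [Finset.mem_filter, Finset.mem_univ, true_and]
    split <;> simp_all
  -- splitting lemma
  have hsplit : ∀ A B : Finset (Fin m), A ⊆ E → B ⊆ Eᶜ →
      (A ∪ B) ∩ E = A ∧ (A ∪ B) \ E = B := by
    intro A B hA hB
    constructor
    · ext j
      simp only [Finset.mem_inter, Finset.mem_union]
      constructor
      · rintro ⟨hj | hj, hjE⟩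
        · exact hj
        · exact absurd hjE (Finset.mem_compl.mp (hB hj))
      · exact fun hj => ⟨Or.inl hj, hA hj⟩
    · ext j
      simp only [Finset.mem_sdiff, Finset.mem_union]
      constructor
      · rintro ⟨hj | hj, hjE⟩
        · exact absurd (hA hj) hjE
        · exact hj
      · exact fun hj => ⟨Or.inr hj, Finset.mem_compl.mp (hB hj)⟩
  -- first claim
  have key : (Finset.univ.filter fun x : Fin m → ZMod 2 =>
        (Finset.univ.filter fun j => x j ≠ 0).card = p / 2 + Δ ∧
        (Finset.univ.filter fun j => (e + x) j ≠ 0).card = p / 2 + Δ).card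
      = p.choose (p / 2) * (m - p).choose Δ := by
    have hcount : (Finset.univ.filter fun x : Fin m → ZMod 2 =>
        (Finset.univ.filter fun j => x j ≠ 0).card = p / 2 + Δ ∧
        (Finset.univ.filter fun j => (e + x) j ≠ 0).card = p / 2 + Δ).card
        = ((E.powersetCard (p / 2)) ×ˢ (Eᶜ.powersetCard Δ)).card := by
      apply Finset.card_bij'
        (i := fun x _ => ((Finset.univ.filter fun j => x j ≠ 0) ∩ E,
                          (Finset.univ.filter fun j => x j ≠ 0) \ E))
        (j := fun P _ => fun k => if k ∈ P.1 ∪ P.2 then (1 : ZMod 2) else 0)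
      · intro x hx
        simp only [Finset.mem_filter, Finset.mem_univ, true_and, hsymm x] at hx
        obtain ⟨h1, h2⟩ := (hchar _).mp hx
        simp only [Finset.mem_product, Finset.mem_powersetCard]
        exact ⟨⟨Finset.inter_subset_right, h1⟩,
          ⟨fun j hj => Finset.mem_compl.mpr (Finset.mem_sdiff.mp hj).2, h2⟩⟩
      · intro P hP
        simp only [Finset.mem_product, Finset.mem_powersetCard] at hP
        obtain ⟨⟨hA, hAc⟩, ⟨hB, hBc⟩⟩ := hP
        obtain ⟨e1, e2⟩ := hsplit P.1 P.2 hA hB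
        simp only [Finset.mem_filter, Finset.mem_univ, true_and, hsymm, hind]
        refine (hchar _).mpr ?_
        rw [e1, e2]
        exact ⟨hAc, hBc⟩
      · intro x hx
        funext k
        rw [show ((Finset.univ.filter fun j => x j ≠ 0) ∩ E) ∪
              ((Finset.univ.filter fun j => x j ≠ 0) \ E)
            = (Finset.univ.filter fun j => x j ≠ 0) by
          rw [Finset.union_comm]; exact Finset.sdiff_union_inter _ _]
        by_cases hk : x k ≠ 0
        · simp [hk, hone _ hk]
        · simp [hk, not_not.mp hk]
      · intro P hP
        simp only [Finset.mem_product, Finset.mem_powersetCard] at hP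
        obtain ⟨⟨hA, _⟩, ⟨hB, _⟩⟩ := hP
        obtain ⟨e1, e2⟩ := hsplit P.1 P.2 hA hB
        simp only [hind]
        rw [e1, e2]
    rw [hcount, Finset.card_product, Finset.card_powersetCard, Finset.card_powersetCard,
      he, Finset.card_compl, he, Fintype.card_fin]
  refine ⟨key, ?_⟩
  -- second claim via bijection with the first set
  have haa : ∀ a : ZMod 2, a + a = 0 := by decide
  rw [← key]
  apply Finset.card_bij' (i := fun xy _ => xy.1) (j := fun x _ => (x, e + x))
  · intro xy hxy
    simp only [Finset.mem_filter, Finset.mem_univ, true_and] at hxy ⊢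
    obtain ⟨hsum, h1, h2⟩ := hxy
    have : e + xy.1 = xy.2 := by
      funext k
      have := congrFun hsum k
      simp only [Pi.add_apply] at this ⊢
      rw [← this, add_comm (xy.1 k), add_assoc, haa, add_zero]
    rw [this]
    exact ⟨h1, h2⟩
  · intro x hx
    simp only [Finset.mem_filter, Finset.mem_univ, true_and] at hx ⊢
    refine ⟨?_, hx.1, hx.2⟩
    funext k
    simp only [Pi.add_apply]
    have := haa (x k)
    rw [add_comm (e k) (x k), ← add_assoc, this, zero_add]
  · intro xy hxy
    simp only [Finset.mem_filter, Finset.mem_univ, true_and] at hxy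
    obtain ⟨hsum, _, _⟩ := hxy
    have : e + xy.1 = xy.2 := by
      funext k
      have h := congrFun hsum k
      simp only [Pi.add_apply] at h ⊢
      rw [← h, add_comm (xy.1 k), add_assoc, haa, add_zero]
    simp [this]
  · intro x hx
    rfl
end
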